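/- arXiv:2509.09754 — 2 statements merged into one kernel-verified Lean document; each statement's English description precedes it below -/
import Mathlib

section
/- Let a : Fin N → ℝ be a probability vector (0 ≤ a i for all i and ∑_i a i = 1), let I : Fin N → ℝ be a binary mask (I i ∈ {0,1} for all i) with retained mass F = ∑_i I i · a i > 0, and set â i = I i · a i / F. Let V ∈ ℝ^{N×d} be a matrix. Then the L1 norm of the row vector (a − â)V is bounded by twice the evicted mass times the largest row L1 norm of V: ∑_{c=1}^{d} |∑_{i=1}^{N} (a i − â i) · V_{i c}| ≤ 2 · (∑_i (1 − I i) · a i) · (max_{k∈[N]} ∑_{c=1}^{d} |V_{k c}|). -/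
/-!
Row `i` of `V` enters the product with weight `a i - â i` and has `ℓ¹` norm at most the largest
row norm, so it suffices that `‖a - â‖₁ = 2 (1 - F)`: the evicted coordinates contribute their
mass `1 - F`, and rescaling the retained ones by `1 / F ≥ 1` adds `∑ â - F = 1 - F` again.
-/

open Finset

section RowNorm

variable {ι κ : Type*} [Fintype ι] [Fintype κ]

theorem sum_abs_sum_mul_le_sum_abs_mul (w : ι → ℝ) (V : ι → κ → ℝ) {M : ℝ}
    (hM : ∀ i, ∑ c, |V i c| ≤ M) :
    ∑ c, |∑ i, w i * V i c| ≤ (∑ i, |w i|) * M :=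
  calc ∑ c, |∑ i, w i * V i c|
      ≤ ∑ c, ∑ i, |w i| * |V i c| := by
        gcongr with c
        simpa only [abs_mul] using abs_sum_le_sum_abs (fun i => w i * V i c) univ
    _ = ∑ i, |w i| * ∑ c, |V i c| := by
        rw [sum_comm]
        simp only [mul_sum]
    _ ≤ ∑ i, |w i| * M := by gcongr with i; exact hM i
    _ = (∑ i, |w i|) * M := (sum_mul ..).symm

end RowNorm

section Mask

theorem abs_sub_mask_mul_div {x m F : ℝ} (hx : 0 ≤ x) (hm : m = 0 ∨ m = 1) (hF0 : 0 < F)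
    (hF1 : F ≤ 1) :
    |x - m * x / F| = (1 - m) * x + (m * x / F - m * x) := by
  rcases hm with rfl | rfl
  · simp [abs_of_nonneg hx]
  · have : x ≤ x / F := by rw [le_div_iff₀ hF0]; nlinarith
    rw [one_mul, abs_of_nonpos (by linarith)]
    ring

variable {ι : Type*} [Fintype ι] {a I : ι → ℝ}

theorem sum_mask_mul_le_sum (ha0 : ∀ i, 0 ≤ a i) (hI : ∀ i, I i = 0 ∨ I i = 1) :
    ∑ i, I i * a i ≤ ∑ i, a i := by
  gcongr with i
  rcases hI i with h | h <;> simp [h, ha0 i]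

theorem sum_abs_sub_mask_mul_div (ha0 : ∀ i, 0 ≤ a i) (ha1 : ∑ i, a i = 1)
    (hI : ∀ i, I i = 0 ∨ I i = 1) (hF : 0 < ∑ i, I i * a i) :
    ∑ i, |a i - I i * a i / ∑ k, I k * a k| = 2 * ∑ i, (1 - I i) * a i := by
  set F := ∑ k, I k * a k
  have hF1 : F ≤ 1 := ha1 ▸ sum_mask_mul_le_sum ha0 hI
  have hrenorm : ∑ i, I i * a i / F = 1 := by rw [← sum_div, div_self hF.ne']
  have hevicted : ∑ i, (1 - I i) * a i = 1 - F := by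
    simp only [sub_mul, one_mul, sum_sub_distrib, ha1, F]
  simp only [abs_sub_mask_mul_div (ha0 _) (hI _) hF hF1, sum_add_distrib, sum_sub_distrib,
    hrenorm, hevicted]
  ring

end Mask

/-- The L1 norm of the row vector `(a − â)V` is bounded by twice the evicted
mass times the largest row L1 norm of `V`. -/
theorem l1_norm_mask_perturbation_mul_le (N d : ℕ) (hN : 0 < N)
    (a I : Fin N → ℝ) (V : Fin N → Fin d → ℝ)
    (ha0 : ∀ i, 0 ≤ a i) (ha1 : ∑ i, a i = 1)
    (hI : ∀ i, I i = 0 ∨ I i = 1)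
    (hF : 0 < ∑ i, I i * a i) :
    ∑ c : Fin d, |∑ i : Fin N, (a i - I i * a i / ∑ k, I k * a k) * V i c| ≤
      2 * (∑ i, (1 - I i) * a i) *
        Finset.univ.sup' (Finset.univ_nonempty_iff.mpr ⟨⟨0, hN⟩⟩)
          (fun k : Fin N => ∑ c : Fin d, |V k c|) := by
  rw [← sum_abs_sub_mask_mul_div ha0 ha1 hI hF]
  exact sum_abs_sum_mul_le_sum_abs_mul _ V fun i => le_sup' (fun k => ∑ c, |V k c|) (mem_univ i)
end

section
/- (Theorem 1.) Consider H heads. For each head h ∈ Fin H let a_h : Fin N → ℝ be a probability vector (0 ≤ a_h i, ∑_i a_h i = 1), V_h ∈ ℝ^{N×d_h} a value matrix, and I_h : Fin N → ℝ a binary mask (I_h i ∈ {0,1}) with retained mass F_h = ∑_i I_h i · a_h i > 0; set â_h i = I_h i · a_h i / F_h. Let W^O ∈ ℝ^{(H·d_h)×d}, indexed by pairs (h,c) ∈ Fin H × Fin d_h in its first coordinate. Define y_j = ∑_{(h,c)} (∑_i a_h i · V_h(i,c)) · W^O((h,c), j) and ŷ_j likewise with â_h in place of a_h. Let Ĉ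 = max_{(h,c)} ∑_j |W^O((h,c), j)| and V̄_h = max_{k∈[N]} ∑_{c∈[d_h]} |V_h(k,c)|. Then the L1 norm of the layer attention output loss satisfies ∑_j |y_j − ŷ_j| ≤ 2 · Ĉ · ∑_{h∈Fin H} ∑_{i∈Fin N} a_h i · V̄_h · (1 − I_h i). -/
/-- Theorem 1: the L1 norm of the layer attention output loss is bounded by
`2 Ĉ ∑_h ∑_i a_h i · V̄_h · (1 − I_h i)`, where `Ĉ` is the largest absolute
row sum of `W^O` and `V̄_h` is the largest row L1 norm of `V_h`. -/
theorem layer_attention_output_loss_upper_bound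
    (H N dh d : ℕ) (hH : 0 < H) (hdh : 0 < dh) (hN : 0 < N)
    (a : Fin H → Fin N → ℝ) (V : Fin H → Fin N → Fin dh → ℝ)
    (I : Fin H → Fin N → ℝ) (W : Fin H × Fin dh → Fin d → ℝ)
    (ha0 : ∀ h i, 0 ≤ a h i) (ha1 : ∀ h, ∑ i, a h i = 1)
    (hI : ∀ h i, I h i = 0 ∨ I h i = 1)
    (hF : ∀ h, 0 < ∑ i, I h i * a h i) :
    let ahat : Fin H → Fin N → ℝ :=
      fun h i => I h i * a h i / ∑ k, I h k * a h k
    let y : Fin d → ℝ :=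
      fun j => ∑ p : Fin H × Fin dh, (∑ i, a p.1 i * V p.1 i p.2) * W p j
    let yhat : Fin d → ℝ :=
      fun j => ∑ p : Fin H × Fin dh, (∑ i, ahat p.1 i * V p.1 i p.2) * W p j
    let C : ℝ :=
      Finset.univ.sup' (Finset.univ_nonempty_iff.mpr ⟨⟨⟨0, hH⟩, ⟨0, hdh⟩⟩⟩)
        (fun p : Fin H × Fin dh => ∑ j, |W p j|)
    let Vbar : Fin H → ℝ :=
      fun h => Finset.univ.sup' (Finset.univ_nonempty_iff.mpr ⟨⟨0, hN⟩⟩)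
        (fun k : Fin N => ∑ c : Fin dh, |V h k c|)
    ∑ j, |y j - yhat j| ≤
      2 * C * ∑ h : Fin H, ∑ i : Fin N, a h i * Vbar h * (1 - I h i) := by
  intro ahat y yhat C Vbar
  have hFle : ∀ h, (∑ k, I h k * a h k) ≤ 1 := by
    intro h
    rw [← ha1 h]
    apply Finset.sum_le_sum
    intro i _
    rcases hI h i with h0 | h1
    · rw [h0]; simpa using ha0 h i
    · rw [h1, one_mul]
  have hC0 : 0 ≤ C := by
    have := Finset.le_sup' (fun p : Fin H × Fin dh => ∑ j, |W p j|)
      (Finset.mem_univ (⟨⟨0, hH⟩, ⟨0, hdh⟩⟩ : Fin H × Fin dh))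
    exact le_trans (Finset.sum_nonneg fun j _ => abs_nonneg _) this
  have hWle : ∀ p : Fin H × Fin dh, (∑ j, |W p j|) ≤ C := fun p =>
    Finset.le_sup' (fun p : Fin H × Fin dh => ∑ j, |W p j|) (Finset.mem_univ p)
  have hVle : ∀ h i, (∑ c, |V h i c|) ≤ Vbar h := fun h i =>
    Finset.le_sup' (fun k : Fin N => ∑ c : Fin dh, |V h k c|) (Finset.mem_univ i)
  have hVbar0 : ∀ h, 0 ≤ Vbar h := fun h =>
    le_trans (Finset.sum_nonneg fun c _ => abs_nonneg _) (hVle h ⟨0, hN⟩)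
  -- key: total variation bound per head
  have key : ∀ h, ∑ i, |a h i - ahat h i| = 2 * ∑ i, a h i * (1 - I h i) := by
    intro h
    set F := ∑ k, I h k * a h k with hFdef
    have hFpos := hF h
    have hterm : ∀ i, |a h i - ahat h i|
        = a h i * (1 - I h i) + a h i * I h i * (1 / F - 1) := by
      intro i
      rcases hI h i with h0 | h1
      · simp [ahat, h0, ← hFdef, abs_of_nonneg (ha0 h i)]
      · have h1F : 1 ≤ 1 / F := by
          rw [le_div_iff₀ hFpos]; simpa using hFle h
        have heq : a h i - ahat h i = -(a h i * (1 / F - 1)) := by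
          simp only [ahat, h1, one_mul, ← hFdef]
          field_simp
          ring
        rw [heq, abs_neg, abs_of_nonneg (mul_nonneg (ha0 h i) (by linarith)), h1]
        ring
    have hsumaI : ∑ i, a h i * I h i = F := by
      rw [hFdef]; exact Finset.sum_congr rfl fun i _ => mul_comm _ _
    have hsum1 : ∑ i, a h i * (1 - I h i) = 1 - F := by
      have h2 : ∑ i, a h i * (1 - I h i) = (∑ i, a h i) - ∑ i, a h i * I h i := by
        rw [← Finset.sum_sub_distrib]; exact Finset.sum_congr rfl fun i _ => by ring
      rw [h2, ha1 h, hsumaI]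
    have hsum2 : ∑ i, a h i * I h i * (1 / F - 1) = 1 - F := by
      rw [← Finset.sum_mul, hsumaI]
      have hF0 : F ≠ 0 := ne_of_gt hFpos
      rw [mul_sub, mul_one_div_cancel hF0, mul_one]
    rw [Finset.sum_congr rfl fun i _ => hterm i, Finset.sum_add_distrib,
      hsum1, hsum2]
    ring
  -- main chain
  calc ∑ j, |y j - yhat j|
      = ∑ j, |∑ p : Fin H × Fin dh, (∑ i, (a p.1 i - ahat p.1 i) * V p.1 i p.2) * W p j| := by
        apply Finset.sum_congr rfl
        intro j _
        congr 1
        simp only [y, yhat, ← Finset.sum_sub_distrib, ← sub_mul]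
    _ ≤ ∑ j, ∑ p : Fin H × Fin dh, |∑ i, (a p.1 i - ahat p.1 i) * V p.1 i p.2| * |W p j| := by
        apply Finset.sum_le_sum
        intro j _
        refine le_trans (Finset.abs_sum_le_sum_abs _ _) ?_
        apply Finset.sum_le_sum
        intro p _
        rw [abs_mul]
    _ = ∑ p : Fin H × Fin dh, |∑ i, (a p.1 i - ahat p.1 i) * V p.1 i p.2| * ∑ j, |W p j| := by
        rw [Finset.sum_comm]
        exact Finset.sum_congr rfl fun p _ => by rw [Finset.mul_sum]
    _ ≤ ∑ p : Fin H × Fin dh, (∑ i, |a p.1 i - ahat p.1 i| * |V p.1 i p.2|) * C := by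
        apply Finset.sum_le_sum
        intro p _
        apply mul_le_mul
        · refine le_trans (Finset.abs_sum_le_sum_abs _ _) ?_
          exact le_of_eq (Finset.sum_congr rfl fun i _ => abs_mul _ _)
        · exact hWle p
        · exact Finset.sum_nonneg fun j _ => abs_nonneg _
        · exact Finset.sum_nonneg fun i _ => mul_nonneg (abs_nonneg _) (abs_nonneg _)
    _ = C * ∑ h : Fin H, ∑ i, |a h i - ahat h i| * ∑ c, |V h i c| := by
        rw [Fintype.sum_prod_type, Finset.mul_sum]
        refine Finset.sum_congr rfl fun h _ => ?_
        simp only [Finset.sum_mul, Finset.mul_sum]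
        rw [Finset.sum_comm]
        exact Finset.sum_congr rfl fun i _ => Finset.sum_congr rfl fun c _ => by ring
    _ ≤ C * ∑ h : Fin H, ∑ i, |a h i - ahat h i| * Vbar h := by
        apply mul_le_mul_of_nonneg_left _ hC0
        apply Finset.sum_le_sum
        intro h _
        apply Finset.sum_le_sum
        intro i _
        exact mul_le_mul_of_nonneg_left (hVle h i) (abs_nonneg _)
    _ = 2 * C * ∑ h : Fin H, ∑ i : Fin N, a h i * Vbar h * (1 - I h i) := by
        rw [Finset.mul_sum, Finset.mul_sum]
        refine Finset.sum_congr rfl fun h _ => ?_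
        have h2 : ∑ i, a h i * Vbar h * (1 - I h i)
            = (∑ i, a h i * (1 - I h i)) * Vbar h := by
          rw [Finset.sum_mul]
          exact Finset.sum_congr rfl fun i _ => by ring
        have h3 : ∑ i, |a h i - ahat h i| * Vbar h
            = (∑ i, |a h i - ahat h i|) * Vbar h := (Finset.sum_mul _ _ _).symm
        rw [h3, h2, key h]
        ring
end
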